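/- Assume β + λω_k ≠ 0 for all k = 0,…,N−1 and σ ∈ ℝ. Let J_N be the N×N all-ones matrix and define the N×N matrix M = (σ²/λ) ((1/N) J_N − I_N) (λ² (A^⊤)² − β² I_N)^{−1} + (σ²/(2β)) A (λA − β I_N)^{−1} (λ A^⊤ + β I_N)^{−1} A^⊤ (all inverses exist under the stated hypotheses). Then for every n ∈ {1,…,N} and every j ∈ {0,…,N−1}, the (n, m) entry of M, where m ∈ {1,…,N} with m ≡ n + j (mod N), equals (σ²/(2βN)) Σ_{k=1}^{N−1} ( γ_k^j / (λ − β − λγ_k) ) · ( (1 − γ_k)² / (λ − (λ+β)γ_k) − 2β / (λ(λ + β − λγ_k)) ). -/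

import Mathlib

/-!
`A` and `Aᵀ` are circulant, so conjugation by the Fourier matrix of a primitive `N`-th root of unity
diagonalises every factor of `M` at once: on the `k`-th Fourier mode `A` acts by `γ_k⁻¹ - 1`, `Aᵀ`
by `γ_k - 1` and `J_N / N` by the indicator of `k = 0`. Since this conjugation is an algebra
homomorphism from symbols to matrices, `M` is the circulant matrix whose symbol is obtained by
substituting these scalars into the formula for `M`, and the `(n, n + j)` entry of such a matrix is
`(1/N) ∑_k s_k γ_k ^ j`. The `k = 0` term vanishes, and for `k ≥ 1` the symbol simplifies to the
stated closed form; `|γ_k| = 1` and `β + λ ω_k ≠ 0` keep every denominator nonzero.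
-/

open Matrix Complex Finset

noncomputable section

/-- The N×N matrix with -1 on the diagonal and 1 on the (cyclic) superdiagonal. -/
def ringMat (N : ℕ) : Matrix (Fin N) (Fin N) ℝ :=
  fun n m => if (m : ℕ) = (n : ℕ) then -1 else if (m : ℕ) = ((n : ℕ) + 1) % N then 1 else 0

/-- Complexification of `ringMat`. -/
def Ac (N : ℕ) : Matrix (Fin N) (Fin N) ℂ := (ringMat N).map Complex.ofReal

/-- γ_k = e^{2πik/N} -/
def gam (N k : ℕ) : ℂ := Complex.exp (2 * Real.pi * Complex.I * k / N)

/-- The N×N all-ones matrix. -/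
def onesMat (N : ℕ) : Matrix (Fin N) (Fin N) ℂ := Matrix.of fun _ _ => 1

/-- The matrix M = (σ²/λ)((1/N)J − I)(λ²(Aᵀ)² − β²I)⁻¹
  + (σ²/(2β)) A (λA − βI)⁻¹ (λAᵀ + βI)⁻¹ Aᵀ. -/
def covMat (N : ℕ) (lam beta σ : ℝ) : Matrix (Fin N) (Fin N) ℂ :=
  ((σ : ℂ) ^ 2 / lam) •
      (((N : ℂ)⁻¹ • onesMat N - 1) *
        ((lam : ℂ) ^ 2 • ((Ac N)ᵀ * (Ac N)ᵀ) - (beta : ℂ) ^ 2 • 1)⁻¹) +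
    ((σ : ℂ) ^ 2 / (2 * beta)) •
      (Ac N * ((lam : ℂ) • Ac N - (beta : ℂ) • 1)⁻¹ *
        ((lam : ℂ) • (Ac N)ᵀ + (beta : ℂ) • 1)⁻¹ * (Ac N)ᵀ)


def fourierMat {K : Type*} [Field K] (ζ : K) (N : ℕ) : Matrix (Fin N) (Fin N) K :=
  vandermonde fun k => ζ ^ (k : ℕ)

def invFourierMat {K : Type*} [Field K] (ζ : K) (N : ℕ) : Matrix (Fin N) (Fin N) K :=
  (N : K)⁻¹ • (fourierMat ζ⁻¹ N)ᵀ

namespace IsPrimitiveRoot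

variable {K : Type*} [Field K] {N : ℕ} {ζ : K}

theorem sum_pow_div_pow (hζ : IsPrimitiveRoot ζ N) (a b : ℕ) :
    ∑ k ∈ range N, (ζ ^ a / ζ ^ b) ^ k = if a % N = b % N then (N : K) else 0 := by
  rcases N.eq_zero_or_pos with rfl | hN
  · simp
  have hζ0 : ζ ≠ 0 := hζ.ne_zero hN.ne'
  have hone : ζ ^ a / ζ ^ b = 1 ↔ a % N = b % N := by
    rw [div_eq_one_iff_eq (pow_ne_zero _ hζ0), (hζ.isOfFinOrder hN.ne').pow_inj_mod,
      ← hζ.eq_orderOf]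
  split_ifs with h
  · simp [hone.mpr h]
  · rw [geom_sum_eq (mt hone.mp h), div_pow, ← pow_mul, ← pow_mul, pow_mul', pow_mul' ζ b,
      hζ.pow_eq_one, one_pow, one_pow, div_one, sub_self, zero_div]

theorem fourierMat_mul_invFourierMat (hζ : IsPrimitiveRoot ζ N) :
    fourierMat ζ N * invFourierMat ζ N = 1 := by
  ext k l
  have : NeZero N := ⟨k.pos.ne'⟩
  have := hζ.neZero'
  rw [invFourierMat, fourierMat, fourierMat, Matrix.mul_smul, Matrix.smul_apply,
    vandermonde_mul_vandermonde_transpose,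
    Fin.sum_univ_eq_sum_range (fun i => (ζ ^ (k : ℕ) * ζ⁻¹ ^ (l : ℕ)) ^ i), inv_pow,
    ← div_eq_mul_inv, sum_pow_div_pow hζ, Nat.mod_eq_of_lt k.isLt, Nat.mod_eq_of_lt l.isLt,
    one_apply]
  simp [Fin.val_inj, NeZero.ne]

theorem invFourierMat_mul_fourierMat (hζ : IsPrimitiveRoot ζ N) :
    invFourierMat ζ N * fourierMat ζ N = 1 :=
  mul_eq_one_comm.mp hζ.fourierMat_mul_invFourierMat

/-- The circulant matrix with discrete Fourier symbol `g`: only `g 0, …, g (N - 1)` matter, `g k`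
being its eigenvalue on the Fourier mode `m ↦ ζ ^ (k * m)`. -/
def circulantOfSymbol (hζ : IsPrimitiveRoot ζ N) : (ℕ → K) →ₐ[K] Matrix (Fin N) (Fin N) K where
  toFun g := invFourierMat ζ N * diagonal (fun k : Fin N => g k) * fourierMat ζ N
  map_one' := by
    simpa only [Pi.one_apply, diagonal_one, Matrix.mul_one] using hζ.invFourierMat_mul_fourierMat
  map_mul' g h := by
    simp only [Matrix.mul_assoc]
    rw [← Matrix.mul_assoc (fourierMat ζ N), hζ.fourierMat_mul_invFourierMat, Matrix.one_mul,
      ← Matrix.mul_assoc (diagonal _), diagonal_mul_diagonal]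
    rfl
  map_zero' := by simp
  map_add' g h := by simp [← diagonal_add, Matrix.mul_add, Matrix.add_mul]
  commutes' c := by
    simp only [Pi.algebraMap_apply, Algebra.algebraMap_self, RingHom.id_apply,
      ← smul_one_eq_diagonal, Matrix.mul_smul, Matrix.smul_mul, Matrix.mul_one,
      hζ.invFourierMat_mul_fourierMat, Algebra.algebraMap_eq_smul_one]

theorem circulantOfSymbol_apply (hζ : IsPrimitiveRoot ζ N) (g : ℕ → K) (n m : Fin N) :
    hζ.circulantOfSymbol g n m =
      (N : K)⁻¹ * ∑ k ∈ range N, g k * (ζ ^ (m : ℕ) / ζ ^ (n : ℕ)) ^ k := by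
  change (invFourierMat ζ N * diagonal (fun k : Fin N => g k) * fourierMat ζ N) n m = _
  rw [Matrix.mul_apply]
  simp only [mul_diagonal, invFourierMat, Matrix.smul_apply, transpose_apply, fourierMat,
    vandermonde_apply, smul_eq_mul, Finset.mul_sum]
  rw [← Fin.sum_univ_eq_sum_range (fun k => (N : K)⁻¹ * (g k * (ζ ^ (m : ℕ) / ζ ^ (n : ℕ)) ^ k))]
  refine Finset.sum_congr rfl fun k _ => ?_
  ring

theorem circulantOfSymbol_apply_of_modEq (hζ : IsPrimitiveRoot ζ N) (g : ℕ → K) {n m : Fin N}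
    {j : ℕ} (h : (m : ℕ) ≡ n + j [MOD N]) :
    hζ.circulantOfSymbol g n m = (N : K)⁻¹ * ∑ k ∈ range N, g k * (ζ ^ k) ^ j := by
  have hζ0 : ζ ≠ 0 := hζ.ne_zero (Fin.pos n).ne'
  rw [circulantOfSymbol_apply, pow_eq_pow_of_modEq h hζ.pow_eq_one, pow_add,
    mul_div_cancel_left₀ _ (pow_ne_zero _ hζ0)]
  simp only [pow_right_comm ζ j]

theorem circulantOfSymbol_pow (hζ : IsPrimitiveRoot ζ N) :
    hζ.circulantOfSymbol (fun k => ζ ^ k) =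
      of fun n m : Fin N => if (n : ℕ) = (m + 1) % N then 1 else 0 := by
  ext n m
  have : NeZero N := ⟨(Fin.pos n).ne'⟩
  have := hζ.neZero'
  have hsummand : ∀ k, ζ ^ k * (ζ ^ (m : ℕ) / ζ ^ (n : ℕ)) ^ k =
      (ζ ^ ((m : ℕ) + 1) / ζ ^ (n : ℕ)) ^ k :=
    fun k => by ring
  simp only [circulantOfSymbol_apply, hsummand, sum_pow_div_pow hζ, Nat.mod_eq_of_lt n.isLt,
    of_apply, eq_comm (a := (n : ℕ))]
  split_ifs <;> simp [NeZero.ne]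

theorem circulantOfSymbol_inv_pow (hζ : IsPrimitiveRoot ζ N) :
    hζ.circulantOfSymbol (fun k => (ζ ^ k)⁻¹) =
      of fun n m : Fin N => if (m : ℕ) = (n + 1) % N then 1 else 0 := by
  ext n m
  have : NeZero N := ⟨(Fin.pos n).ne'⟩
  have := hζ.neZero'
  have hsummand : ∀ k, (ζ ^ k)⁻¹ * (ζ ^ (m : ℕ) / ζ ^ (n : ℕ)) ^ k =
      (ζ ^ (m : ℕ) / ζ ^ ((n : ℕ) + 1)) ^ k :=
    fun k => by ring
  simp only [circulantOfSymbol_apply, hsummand, sum_pow_div_pow hζ, Nat.mod_eq_of_lt m.isLt,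
    of_apply]
  split_ifs <;> simp [NeZero.ne]

theorem circulantOfSymbol_single_zero (hζ : IsPrimitiveRoot ζ N) :
    hζ.circulantOfSymbol (Pi.single 0 1) = (N : K)⁻¹ • of fun _ _ => 1 := by
  ext n m
  simp [circulantOfSymbol_apply, Pi.single_apply, Fin.pos n]

theorem circulantOfSymbol_congr (hζ : IsPrimitiveRoot ζ N) {g h : ℕ → K}
    (hgh : ∀ k < N, g k = h k) : hζ.circulantOfSymbol g = hζ.circulantOfSymbol h := by
  ext n m
  simp only [circulantOfSymbol_apply]
  congr 1
  exact Finset.sum_congr rfl fun k hk => by rw [hgh k (mem_range.mp hk)]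

theorem circulantOfSymbol_inv (hζ : IsPrimitiveRoot ζ N) {g : ℕ → K} (hg : ∀ k < N, g k ≠ 0) :
    (hζ.circulantOfSymbol g)⁻¹ = hζ.circulantOfSymbol g⁻¹ := by
  refine inv_eq_right_inv ?_
  rw [← map_mul, ← map_one hζ.circulantOfSymbol]
  exact hζ.circulantOfSymbol_congr fun k hk => mul_inv_cancel₀ (hg k hk)

end IsPrimitiveRoot

theorem gam_eq_pow (N k : ℕ) : gam N k = gam N 1 ^ k := by
  rw [gam, gam, ← Complex.exp_nat_mul]
  congr 1
  push_cast
  ring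

theorem isPrimitiveRoot_gam {N : ℕ} (hN : N ≠ 0) : IsPrimitiveRoot (gam N 1) N := by
  simpa [gam] using Complex.isPrimitiveRoot_exp N hN

theorem Ac_eq_sub_one {N : ℕ} (hN : 2 ≤ N) :
    Ac N = (of fun n m : Fin N => if (m : ℕ) = (n + 1) % N then (1 : ℂ) else 0) - 1 := by
  ext n m
  have hsucc : ((n : ℕ) + 1) % N ≠ n := by
    rcases Nat.lt_or_ge ((n : ℕ) + 1) N with h | h
    · rw [Nat.mod_eq_of_lt h]; omega
    · rw [show (n : ℕ) + 1 = N by omega, Nat.mod_self]; omega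
  by_cases hmn : m = n
  · subst hmn
    simp [Ac, ringMat, Ne.symm hsucc]
  · simp [Ac, ringMat, Fin.val_ne_of_ne hmn, one_apply_ne' hmn, apply_ite]

theorem Ac_eq_circulantOfSymbol {N : ℕ} (hN : 2 ≤ N) {ζ : ℂ} (hζ : IsPrimitiveRoot ζ N) :
    Ac N = hζ.circulantOfSymbol ((fun k => (ζ ^ k)⁻¹) - 1) := by
  rw [map_sub, map_one, hζ.circulantOfSymbol_inv_pow, Ac_eq_sub_one hN]

theorem transpose_Ac_eq_circulantOfSymbol {N : ℕ} (hN : 2 ≤ N) {ζ : ℂ}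
    (hζ : IsPrimitiveRoot ζ N) :
    (Ac N)ᵀ = hζ.circulantOfSymbol ((fun k => ζ ^ k) - 1) := by
  rw [map_sub, map_one, hζ.circulantOfSymbol_pow, Ac_eq_sub_one hN, transpose_sub, transpose_one]
  rfl

theorem ofReal_mul_sub_one_sub_ne_zero {z : ℂ} (hz : ‖z‖ ≤ 1) {a b : ℝ} (ha : 0 ≤ a)
    (hb : 0 < b) : (a : ℂ) * (z - 1) - b ≠ 0 := by
  intro h
  have hre := congrArg Complex.re h
  simp only [sub_re, mul_re, ofReal_re, ofReal_im, one_re, zero_re] at hre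
  nlinarith [(re_le_norm z).trans hz]

def covSymbol (lam beta σ : ℝ) (ζ : ℂ) : ℕ → ℂ :=
  ((σ : ℂ) ^ 2 / lam) • ((Pi.single 0 1 - 1) *
      ((lam : ℂ) ^ 2 • (((fun k => ζ ^ k) - 1) * ((fun k => ζ ^ k) - 1)) - (beta : ℂ) ^ 2 • 1)⁻¹) +
    ((σ : ℂ) ^ 2 / (2 * beta)) • (((fun k => (ζ ^ k)⁻¹) - 1) *
      ((lam : ℂ) • ((fun k => (ζ ^ k)⁻¹) - 1) - (beta : ℂ) • 1)⁻¹ *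
      ((lam : ℂ) • ((fun k => ζ ^ k) - 1) + (beta : ℂ) • 1)⁻¹ * ((fun k => ζ ^ k) - 1))

theorem covMat_eq_circulantOfSymbol {N : ℕ} (hN : 2 ≤ N) {ζ : ℂ} (hζ : IsPrimitiveRoot ζ N)
    {lam beta : ℝ} (σ : ℝ) (hlam : 0 ≤ lam) (hbeta : 0 < beta)
    (hinv : ∀ k < N, (beta : ℂ) + lam * (ζ ^ k - 1) ≠ 0) :
    covMat N lam beta σ = hζ.circulantOfSymbol (covSymbol lam beta σ ζ) := by
  have hnorm : ∀ k, ‖ζ ^ k‖ = 1 := fun k => by rw [norm_pow, hζ.norm'_eq_one (by omega), one_pow]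
  have hminus : ∀ k, (lam : ℂ) * (ζ ^ k - 1) - beta ≠ 0 := fun k =>
    ofReal_mul_sub_one_sub_ne_zero (hnorm k).le hlam hbeta
  have hplus : ∀ k < N, (lam : ℂ) * (ζ ^ k - 1) + beta ≠ 0 := fun k hk h =>
    hinv k hk (by linear_combination h)
  have hsq : ∀ k < N, ((lam : ℂ) ^ 2 • (((fun k => ζ ^ k) - 1) * ((fun k => ζ ^ k) - 1)) -
      (beta : ℂ) ^ 2 • 1 : ℕ → ℂ) k ≠ 0 := fun k hk => by
    convert mul_ne_zero (hminus k) (hplus k hk) using 1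
    simp only [Pi.sub_apply, Pi.smul_apply, Pi.mul_apply, Pi.one_apply, smul_eq_mul]
    ring
  have hinvMinus :
      ∀ k < N, ((lam : ℂ) • ((fun k => (ζ ^ k)⁻¹) - 1) - (beta : ℂ) • 1 : ℕ → ℂ) k ≠ 0 :=
    fun k _ => by
      simpa using ofReal_mul_sub_one_sub_ne_zero (by rw [norm_inv, hnorm, inv_one]) hlam hbeta
  have hinvPlus : ∀ k < N, ((lam : ℂ) • ((fun k => ζ ^ k) - 1) + (beta : ℂ) • 1 : ℕ → ℂ) k ≠ 0 :=
    fun k hk => by simpa using hplus k hk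
  have hJ : (N : ℂ)⁻¹ • onesMat N = hζ.circulantOfSymbol (Pi.single 0 1) :=
    hζ.circulantOfSymbol_single_zero.symm
  simp only [covSymbol, map_add, map_smul, map_mul]
  rw [← hζ.circulantOfSymbol_inv hsq, ← hζ.circulantOfSymbol_inv hinvMinus,
    ← hζ.circulantOfSymbol_inv hinvPlus]
  simp only [map_add, map_sub, map_smul, map_mul, map_one]
  rw [covMat, hJ, transpose_Ac_eq_circulantOfSymbol hN hζ, Ac_eq_circulantOfSymbol hN hζ]
  simp only [map_sub, map_one]

theorem covSymbol_zero (lam beta σ : ℝ) (ζ : ℂ) : covSymbol lam beta σ ζ 0 = 0 := by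
  simp [covSymbol]

theorem covSymbol_apply {lam beta : ℝ} (σ : ℝ) (hlam : 0 < lam) (hbeta : 0 < beta) {ζ : ℂ}
    {k : ℕ} (hk : k ≠ 0) (hnorm : ‖ζ ^ k‖ = 1) (hinv : (beta : ℂ) + lam * (ζ ^ k - 1) ≠ 0) :
    covSymbol lam beta σ ζ k =
      (σ : ℂ) ^ 2 / (2 * beta) / (lam - beta - lam * ζ ^ k) *
        ((1 - ζ ^ k) ^ 2 / (lam - (lam + beta) * ζ ^ k) -
          2 * beta / (lam * (lam + beta - lam * ζ ^ k))) := by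
  simp only [covSymbol, Pi.add_apply, Pi.smul_apply, Pi.mul_apply, Pi.sub_apply, Pi.inv_apply,
    Pi.one_apply, Pi.single_apply, if_neg hk, smul_eq_mul]
  set z := ζ ^ k
  have hz : z ≠ 0 := by rintro h; simp [h] at hnorm
  have hlam' : (lam : ℂ) ≠ 0 := ofReal_ne_zero.mpr hlam.ne'
  have hbeta' : (beta : ℂ) ≠ 0 := ofReal_ne_zero.mpr hbeta.ne'
  have h1 : (lam : ℂ) - beta - lam * z ≠ 0 := fun h => hinv (by linear_combination -h)
  have h2 : (lam : ℂ) + beta - lam * z ≠ 0 := fun h =>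
    ofReal_mul_sub_one_sub_ne_zero hnorm.le hlam.le hbeta (by linear_combination -h)
  have h3 : (lam : ℂ) - (lam + beta) * z ≠ 0 := fun h =>
    ofReal_mul_sub_one_sub_ne_zero (by rw [norm_inv, hnorm, inv_one]) hlam.le hbeta
      (by field_simp; linear_combination h)
  rw [show (lam : ℂ) ^ 2 * ((z - 1) * (z - 1)) - beta ^ 2 * 1 =
      (lam - beta - lam * z) * (lam + beta - lam * z) by ring,
    show (lam : ℂ) * (z⁻¹ - 1) - beta * 1 = (lam - (lam + beta) * z) / z by field_simp; ring,
    show (lam : ℂ) * (z - 1) + beta * 1 = -(lam - beta - lam * z) by ring]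
  field_simp
  ring

/-- the (n, n+j mod N) entry of M equals
(σ²/(2βN)) Σ_{k=1}^{N−1} (γ_k^j/(λ−β−λγ_k)) ((1−γ_k)²/(λ−(λ+β)γ_k) − 2β/(λ(λ+β−λγ_k))). -/
theorem stmt11 (N : ℕ) (hN : 2 ≤ N) (lam beta σ : ℝ) (hlam : 0 < lam) (hbeta : 0 < beta)
    (hinv : ∀ k < N, (beta : ℂ) + lam * (gam N k - 1) ≠ 0) :
    ∀ n m : Fin N, ∀ j : ℕ, j < N → (m : ℕ) = ((n : ℕ) + j) % N →
      covMat N lam beta σ n m =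
        ((σ : ℂ) ^ 2 / (2 * beta * N)) *
          ∑ k ∈ Finset.Ico 1 N,
            gam N k ^ j / (lam - beta - lam * gam N k) *
              ((1 - gam N k) ^ 2 / (lam - (lam + beta) * gam N k) -
                2 * beta / (lam * (lam + beta - lam * gam N k))) := by
  intro n m j _ hm
  have hζ := isPrimitiveRoot_gam (by omega : N ≠ 0)
  set ζ := gam N 1
  have hpow : ∀ k, gam N k = ζ ^ k := gam_eq_pow N
  simp only [hpow] at hinv ⊢
  rw [covMat_eq_circulantOfSymbol hN hζ σ hlam.le hbeta hinv,
    hζ.circulantOfSymbol_apply_of_modEq _ (hm ▸ Nat.mod_modEq _ _),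
    sum_range_eq_add_Ico _ (by omega), covSymbol_zero, zero_mul, zero_add, mul_sum, mul_sum]
  refine sum_congr rfl fun k hk => ?_
  have hk := mem_Ico.mp hk
  rw [covSymbol_apply σ hlam hbeta (by omega)
    (by rw [norm_pow, hζ.norm'_eq_one (by omega), one_pow]) (hinv k hk.2)]
  ring
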